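/- arXiv:1202.2568 — 3 statements merged into one kernel-verified Lean document; each statement's English description precedes it below -/
import Mathlib

section
/- Let f be holomorphic on Ω and suppose there are M ≥ 0 and m ∈ ℝ such that the second complex partial derivative ∂²f/∂z₂² satisfies |∂²f/∂z₂²(z₁,z₂)| ≤ M for all (z₁,z₂) ∈ Ω and ψ(z₁) ≥ m for all z₁ ∈ 𝔻. Then there exists a constant C > 0 such that for every integer k ≥ 2 and every (z₁,z₂) ∈ Ω one has |a_k(z₁)·z₂^k| ≤ C/k². -/
open Metric

/-- The complete Hartogs domain `Ω = {(z₁,z₂) : z₁ ∈ 𝔻, |z₂| < e^{-ψ(z₁)}}`. -/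
def HartogsDomain (ψ : ℂ → ℝ) : Set (ℂ × ℂ) :=
  {z : ℂ × ℂ | z.1 ∈ ball (0 : ℂ) 1 ∧ ‖z.2‖ < Real.exp (-ψ z.1)}

/-- The `k`-th Taylor coefficient at `0` of the slice `z₂ ↦ f (z₁, z₂)`. -/
noncomputable def sliceCoeff (f : ℂ × ℂ → ℂ) (k : ℕ) (z₁ : ℂ) : ℂ :=
  iteratedDeriv k (fun w => f (z₁, w)) 0 / (Nat.factorial k : ℂ)

/-!
Fix `z₁ ∈ 𝔻` and write `g = f(z₁, ·)`, holomorphic on the disc of radius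
`R = e^{-ψ(z₁)} ≤ e^{-m}`. For `|z₂| < R`, Cauchy's estimate applied to `g''` on the circle of
radius `|z₂|` gives `|g^{(k)}(0)| ≤ (k-2)! M / |z₂|^{k-2}`, hence
`|a_k(z₁) z₂^k| ≤ M |z₂|² / (k(k-1)) ≤ 2 M e^{-2m} / k²`.
-/

theorem iteratedDeriv_add_eq_iteratedDeriv_iteratedDeriv {𝕜 F : Type*}
    [NontriviallyNormedField 𝕜] [NormedAddCommGroup F] [NormedSpace 𝕜 F]
    (f : 𝕜 → F) (m n : ℕ) :
    iteratedDeriv (m + n) f = iteratedDeriv m (iteratedDeriv n f) := by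
  simp only [iteratedDeriv_eq_iterate]
  exact Function.iterate_add_apply deriv m n f

theorem norm_iteratedDeriv_add_le_of_norm_iteratedDeriv_le {F : Type*} [NormedAddCommGroup F]
    [NormedSpace ℂ F] [CompleteSpace F] {g : ℂ → F} {c : ℂ} {r R M : ℝ}
    (hg : DifferentiableOn ℂ g (ball c R)) (j : ℕ)
    (hM : ∀ w ∈ ball c R, ‖iteratedDeriv j g w‖ ≤ M) (hr : 0 < r) (hrR : r < R) (n : ℕ) :
    ‖iteratedDeriv (n + j) g c‖ ≤ n.factorial * M / r ^ n := by
  have hgj : DifferentiableOn ℂ (iteratedDeriv j g) (ball c R) := by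
    rw [iteratedDeriv_eq_iterate]
    exact ((hg.analyticOnNhd isOpen_ball).iterated_deriv j).differentiableOn
  have hsub : closedBall c r ⊆ ball c R := closedBall_subset_ball hrR
  rw [iteratedDeriv_add_eq_iteratedDeriv_iteratedDeriv]
  exact Complex.norm_iteratedDeriv_le_of_forall_mem_sphere_norm_le n hr
    (hgj.diffContOnCl_ball hsub) fun w hw => hM w (hsub (sphere_subset_closedBall hw))

theorem norm_taylorTerm_le_of_norm_iteratedDeriv_two_le {g : ℂ → ℂ} {R M : ℝ}
    (hg : DifferentiableOn ℂ g (ball 0 R)) (hM : ∀ w ∈ ball 0 R, ‖iteratedDeriv 2 g w‖ ≤ M)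
    (n : ℕ) {w : ℂ} (hw : ‖w‖ < R) :
    ‖iteratedDeriv (n + 2) g 0 / ((n + 2).factorial : ℂ) * w ^ (n + 2)‖
      ≤ M * ‖w‖ ^ 2 / ((n + 2) * (n + 1)) := by
  rcases eq_or_ne w 0 with rfl | hw0
  · simp
  have hr : 0 < ‖w‖ := norm_pos_iff.2 hw0
  have hcauchy := norm_iteratedDeriv_add_le_of_norm_iteratedDeriv_le hg 2 hM hr hw n
  have hfact : ((n + 2).factorial : ℝ) = (n + 2) * (n + 1) * n.factorial := by
    push_cast [Nat.factorial_succ]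
    ring
  calc ‖iteratedDeriv (n + 2) g 0 / ((n + 2).factorial : ℂ) * w ^ (n + 2)‖
      = ‖iteratedDeriv (n + 2) g 0‖ * ‖w‖ ^ n * ‖w‖ ^ 2 / (n + 2).factorial := by
        rw [norm_mul, norm_div, norm_pow, Complex.norm_natCast]
        ring
    _ ≤ n.factorial * M / ‖w‖ ^ n * ‖w‖ ^ n * ‖w‖ ^ 2 / (n + 2).factorial := by gcongr
    _ = M * ‖w‖ ^ 2 / ((n + 2) * (n + 1)) := by
        rw [hfact]
        field_simp

theorem mk_mem_hartogsDomain_iff {ψ : ℂ → ℝ} {z₁ w : ℂ} :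
    (z₁, w) ∈ HartogsDomain ψ ↔ z₁ ∈ ball (0 : ℂ) 1 ∧ w ∈ ball (0 : ℂ) (Real.exp (-ψ z₁)) := by
  simp [HartogsDomain]

theorem differentiableOn_slice_of_differentiableOn_hartogsDomain {ψ : ℂ → ℝ} {f : ℂ × ℂ → ℂ}
    (hf : DifferentiableOn ℂ f (HartogsDomain ψ)) {z₁ : ℂ} (hz₁ : z₁ ∈ ball (0 : ℂ) 1) :
    DifferentiableOn ℂ (fun w => f (z₁, w)) (ball 0 (Real.exp (-ψ z₁))) :=
  hf.comp ((differentiableOn_const z₁).prodMk differentiableOn_id)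
    fun _ hw => mk_mem_hartogsDomain_iff.2 ⟨hz₁, hw⟩

theorem inv_mul_add_one_le_two_div_sq (n : ℕ) :
    1 / (((n : ℝ) + 2) * (n + 1)) ≤ 2 / ((n + 2 : ℕ) : ℝ) ^ 2 := by
  rw [div_le_div_iff₀ (by positivity) (by positivity)]
  push_cast
  nlinarith [(n.cast_nonneg : (0 : ℝ) ≤ n)]

theorem coeff_term_bound_general (ψ : ℂ → ℝ)
    (f : ℂ × ℂ → ℂ) (hf : DifferentiableOn ℂ f (HartogsDomain ψ))
    (M : ℝ) (m : ℝ)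
    (hbd : ∀ z ∈ HartogsDomain ψ, ‖iteratedDeriv 2 (fun w => f (z.1, w)) z.2‖ ≤ M)
    (hm : ∀ z₁ ∈ ball (0 : ℂ) 1, m ≤ ψ z₁) :
    ∃ C : ℝ, 0 < C ∧ ∀ k : ℕ, 2 ≤ k → ∀ z ∈ HartogsDomain ψ,
      ‖sliceCoeff f k z.1 * z.2 ^ k‖ ≤ C / (k : ℝ) ^ 2 := by
  refine ⟨2 * (max M 1 * Real.exp (-m) ^ 2), by positivity, ?_⟩
  rintro k hk ⟨z₁, w⟩ ⟨hz₁, hw⟩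
  obtain ⟨n, rfl⟩ := Nat.exists_eq_add_of_le' hk
  have hslice := differentiableOn_slice_of_differentiableOn_hartogsDomain hf hz₁
  have hbd' : ∀ v ∈ ball (0 : ℂ) (Real.exp (-ψ z₁)),
      ‖iteratedDeriv 2 (fun w => f (z₁, w)) v‖ ≤ M :=
    fun v hv => hbd (z₁, v) (mk_mem_hartogsDomain_iff.2 ⟨hz₁, hv⟩)
  have hwm : ‖w‖ ≤ Real.exp (-m) := hw.le.trans (Real.exp_le_exp.2 (by linarith [hm z₁ hz₁]))
  calc ‖sliceCoeff f (n + 2) z₁ * w ^ (n + 2)‖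
      ≤ M * ‖w‖ ^ 2 / ((n + 2) * (n + 1)) :=
        norm_taylorTerm_le_of_norm_iteratedDeriv_two_le hslice hbd' n hw
    _ ≤ max M 1 * Real.exp (-m) ^ 2 * (1 / ((n + 2) * (n + 1))) := by
        rw [mul_one_div]
        gcongr
        exact le_max_left M 1
    _ ≤ max M 1 * Real.exp (-m) ^ 2 * (2 / ((n + 2 : ℕ) : ℝ) ^ 2) := by
        exact mul_le_mul_of_nonneg_left (inv_mul_add_one_le_two_div_sq n) (by positivity)
    _ = 2 * (max M 1 * Real.exp (-m) ^ 2) / ((n + 2 : ℕ) : ℝ) ^ 2 := by ring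

/-- If `∂²f/∂z₂²` is bounded on `Ω` and `ψ` is bounded below on `𝔻`, then
`|a_k(z₁) z₂^k| ≤ C / k²` uniformly on `Ω` for `k ≥ 2`. -/
theorem coeff_term_bound (ψ : ℂ → ℝ) (hψ : ContinuousOn ψ (ball (0 : ℂ) 1))
    (f : ℂ × ℂ → ℂ) (hf : DifferentiableOn ℂ f (HartogsDomain ψ))
    (M : ℝ) (hM : 0 ≤ M) (m : ℝ)
    (hbd : ∀ z ∈ HartogsDomain ψ, ‖iteratedDeriv 2 (fun w => f (z.1, w)) z.2‖ ≤ M)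
    (hm : ∀ z₁ ∈ ball (0 : ℂ) 1, m ≤ ψ z₁) :
    ∃ C : ℝ, 0 < C ∧ ∀ k : ℕ, 2 ≤ k → ∀ z ∈ HartogsDomain ψ,
      ‖sliceCoeff f k z.1 * z.2 ^ k‖ ≤ C / (k : ℝ) ^ 2 :=
  coeff_term_bound_general ψ f hf M m hbd hm
end

section
/- Let f be holomorphic on Ω. Then for every integer k ≥ 0, the coefficient function a_k : 𝔻 → ℂ, defined by a_k(z₁) = the k-th Taylor coefficient at 0 of z₂ ↦ f(z₁,z₂), is holomorphic (complex differentiable) on 𝔻. -/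
open Metric

/-!
Near a point `(a, 0)` of the open set `Ω` the slices `w ↦ f (z, w)` are holomorphic on a disc
of radius `r` independent of `z`, so by Cauchy's formula
`a_k(z) = (2πi)⁻¹ ∮_{|w| = r} f (z, w) / w ^ (k + 1) dw` for `z` near `a`. The integrand is
holomorphic in `z`, and the Cauchy estimate in the first variable bounds its `z`-derivative
uniformly on the circle, so the integral may be differentiated under the integral sign.
-/

open Complex MeasureTheory Filter Topology
open scoped Real

theorem isOpen_hartogsDomain (ψ : ℂ → ℝ) (hψ : ContinuousOn ψ (ball (0 : ℂ) 1)) :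
    IsOpen (HartogsDomain ψ) := by
  have hcont : ContinuousOn (fun z : ℂ × ℂ => Real.exp (-ψ z.1) - ‖z.2‖)
      (Prod.fst ⁻¹' ball (0 : ℂ) 1) :=
    (Real.continuous_exp.comp_continuousOn
      (hψ.comp continuousOn_fst fun _ hz => hz).neg).sub continuous_snd.norm.continuousOn
  convert hcont.isOpen_inter_preimage (isOpen_ball.preimage continuous_fst)
    (isOpen_Ioi (a := 0)) using 1
  ext z
  simp [HartogsDomain, sub_pos]

section PartialDerivative

variable {E : Type*} [NormedAddCommGroup E] [NormedSpace ℂ E]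

theorem DifferentiableAt.hasDerivAt_fun_prodMk_const {f : ℂ × ℂ → E} {z w : ℂ}
    (hf : DifferentiableAt ℂ f (z, w)) :
    HasDerivAt (fun u => f (u, w)) (fderiv ℂ f (z, w) (1, 0)) z :=
  hf.hasFDerivAt.comp_hasDerivAt z ((hasDerivAt_id z).prodMk (hasDerivAt_const z w))

theorem norm_fderiv_apply_one_zero_le {f : ℂ × ℂ → E} {s : Set (ℂ × ℂ)} (hs : IsOpen s)
    (hf : DifferentiableOn ℂ f s) {z w : ℂ} {r C : ℝ} (hr : 0 < r)
    (hmem : ∀ u ∈ closedBall z r, (u, w) ∈ s) (hC : ∀ u ∈ sphere z r, ‖f (u, w)‖ ≤ C) :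
    ‖fderiv ℂ f (z, w) (1, 0)‖ ≤ C / r := by
  have hslice : DifferentiableOn ℂ (fun u => f (u, w)) (closedBall z r) := fun u hu =>
    ((hf.differentiableAt (hs.mem_nhds (hmem u hu))).comp u
      (differentiableAt_id.prodMk (differentiableAt_const w))).differentiableWithinAt
  have hdiff := hf.differentiableAt (hs.mem_nhds (hmem z (mem_closedBall_self hr.le)))
  rw [← hdiff.hasDerivAt_fun_prodMk_const.deriv]
  exact norm_deriv_le_of_forall_mem_sphere_norm_le hr
    (hslice.mono closure_ball_subset_closedBall).diffContOnCl hC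

theorem exists_forall_norm_fderiv_apply_one_zero_le {f : ℂ × ℂ → E} {s : Set (ℂ × ℂ)}
    (hs : IsOpen s) (hf : DifferentiableOn ℂ f s) {a : ℂ} {ρ : ℝ} {t : Set ℂ}
    (ht : IsCompact t) (hρ : 0 < ρ) (hsub : closedBall a ρ ×ˢ t ⊆ s) :
    ∃ C, ∀ z ∈ ball a (ρ / 2), ∀ w ∈ t, ‖fderiv ℂ f (z, w) (1, 0)‖ ≤ C := by
  obtain ⟨M, hM⟩ := ((isCompact_closedBall a ρ).prod ht).exists_bound_of_continuousOn
    (hf.continuousOn.mono hsub)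
  refine ⟨M / (ρ / 2), fun z hz w hw => ?_⟩
  have hball : closedBall z (ρ / 2) ⊆ closedBall a ρ :=
    closedBall_subset_closedBall' (by linarith [mem_ball.mp hz])
  exact norm_fderiv_apply_one_zero_le hs hf (half_pos hρ) (fun u hu => hsub ⟨hball hu, hw⟩)
    fun u hu => hM (u, w) ⟨hball (sphere_subset_closedBall hu), hw⟩

end PartialDerivative

theorem differentiableAt_circleIntegral_param {f : ℂ × ℂ → ℂ} {s : Set (ℂ × ℂ)}
    (hs : IsOpen s) (hf : DifferentiableOn ℂ f s) {a c : ℂ} {ρ R : ℝ} (hρ : 0 < ρ)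
    (hsub : closedBall a ρ ×ˢ sphere c |R| ⊆ s) :
    DifferentiableAt ℂ (fun z => ∮ w in C(c, R), f (z, w)) a := by
  have hmem : ∀ z ∈ closedBall a ρ, ∀ θ, (z, circleMap c R θ) ∈ s := fun z hz θ =>
    hsub ⟨hz, circleMap_mem_sphere' c R θ⟩
  obtain ⟨C, hC⟩ := exists_forall_norm_fderiv_apply_one_zero_le hs hf (isCompact_sphere c |R|)
    hρ hsub
  have hderiv : Continuous (deriv (circleMap c R)) := by
    simpa only [funext (deriv_circleMap c R)] using (continuous_circleMap 0 R).mul_const I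
  have hcont : ∀ z ∈ closedBall a ρ,
      Continuous fun θ => deriv (circleMap c R) θ • f (z, circleMap c R θ) := fun z hz =>
    hderiv.smul (hf.continuousOn.comp_continuous
      (continuous_const.prodMk (continuous_circleMap c R)) (hmem z hz))
  have hF'_meas : Measurable fun θ =>
      deriv (circleMap c R) θ • fderiv ℂ f (a, circleMap c R θ) (1, 0) :=
    hderiv.measurable.smul ((measurable_fderiv_apply_const ℂ f (1, 0)).comp
      (measurable_const.prodMk (continuous_circleMap c R).measurable))
  refine (intervalIntegral.hasDerivAt_integral_of_dominated_loc_of_deriv_le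
    (F' := fun z θ => deriv (circleMap c R) θ • fderiv ℂ f (z, circleMap c R θ) (1, 0))
    (bound := fun _ => |R| * C) (ball_mem_nhds a (half_pos hρ)) ?_
    ((hcont a (mem_closedBall_self hρ.le)).intervalIntegrable _ _)
    hF'_meas.aestronglyMeasurable ?_ intervalIntegrable_const ?_).2.differentiableAt
  · filter_upwards [closedBall_mem_nhds a hρ] with z hz
    exact (hcont z hz).aestronglyMeasurable
  · refine ae_of_all _ fun θ _ z hz => ?_
    rw [norm_smul, deriv_circleMap, norm_mul, norm_circleMap_zero, norm_I, mul_one]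
    exact mul_le_mul_of_nonneg_left (hC z hz _ (circleMap_mem_sphere' c R θ)) (abs_nonneg R)
  · refine ae_of_all _ fun θ _ z hz => ?_
    have hz' : z ∈ closedBall a ρ := ball_subset_closedBall (ball_subset_ball (by linarith) hz)
    exact (hf.differentiableAt (hs.mem_nhds (hmem z hz' θ))).hasDerivAt_fun_prodMk_const.const_smul
      (deriv (circleMap c R) θ)

theorem sliceCoeff_eq_circleIntegral {f : ℂ × ℂ → ℂ} (k : ℕ) {z : ℂ} {r : ℝ} (hr : 0 < r)
    (hf : DifferentiableOn ℂ (fun w => f (z, w)) (closedBall 0 r)) :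
    sliceCoeff f k z = (2 * π * I)⁻¹ * ∮ w in C(0, r), (1 / w ^ (k + 1)) • f (z, w) := by
  have hcauchy := hf.circleIntegral_one_div_sub_center_pow_smul hr k
  simp only [sub_zero] at hcauchy
  rw [hcauchy, sliceCoeff, smul_eq_mul]
  field_simp

theorem DifferentiableOn.differentiableAt_sliceCoeff {f : ℂ × ℂ → ℂ} {s : Set (ℂ × ℂ)}
    (hs : IsOpen s) (hf : DifferentiableOn ℂ f s) (k : ℕ) {a : ℂ} (ha : (a, 0) ∈ s) :
    DifferentiableAt ℂ (sliceCoeff f k) a := by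
  obtain ⟨r, hr, hsub⟩ := nhds_basis_closedBall.mem_iff.mp (hs.mem_nhds ha)
  rw [← closedBall_prod_same] at hsub
  have hcoeff : sliceCoeff f k =ᶠ[𝓝 a]
      fun z => (2 * π * I)⁻¹ * ∮ w in C(0, r), (1 / w ^ (k + 1)) • f (z, w) := by
    filter_upwards [closedBall_mem_nhds a hr] with z hz
    exact sliceCoeff_eq_circleIntegral k hr <| hf.comp
      ((differentiableOn_const z).prodMk differentiableOn_id) fun w hw => hsub ⟨hz, hw⟩
  have hkernel : DifferentiableOn ℂ (fun p : ℂ × ℂ => 1 / p.2 ^ (k + 1)) {p | p.2 ≠ 0} :=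
    fun p (hp : p.2 ≠ 0) => by fun_prop (disch := exact pow_ne_zero _ hp)
  have hintegrand : DifferentiableOn ℂ (fun p : ℂ × ℂ => (1 / p.2 ^ (k + 1)) • f p)
      (s ∩ {p | p.2 ≠ 0}) :=
    (hkernel.mono Set.inter_subset_right).fun_smul (hf.mono Set.inter_subset_left)
  have hintegral := differentiableAt_circleIntegral_param
    (hs.inter (isOpen_ne_fun continuous_snd continuous_const)) hintegrand hr fun p hp =>
      ⟨hsub ⟨hp.1, sphere_subset_closedBall (abs_of_pos hr ▸ hp.2)⟩,
        ne_zero_of_mem_sphere (abs_pos.mpr hr.ne').ne' ⟨_, hp.2⟩⟩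
  exact hcoeff.differentiableAt_iff.mpr (hintegral.const_mul _)

/-- For `f` holomorphic on `Ω`, each coefficient function `a_k` is holomorphic on `𝔻`. -/
theorem coeff_holomorphic (ψ : ℂ → ℝ) (hψ : ContinuousOn ψ (ball (0 : ℂ) 1))
    (f : ℂ × ℂ → ℂ) (hf : DifferentiableOn ℂ f (HartogsDomain ψ)) :
    ∀ k : ℕ, DifferentiableOn ℂ (fun z₁ => sliceCoeff f k z₁) (ball (0 : ℂ) 1) := fun k a ha =>
  (hf.differentiableAt_sliceCoeff (isOpen_hartogsDomain ψ hψ) k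
    ⟨ha, by simpa using Real.exp_pos _⟩).differentiableWithinAt
end

section
/- Suppose ψ extends to a continuous function on the closed unit disc, and suppose F : ℂ² → ℂ is infinitely real-differentiable (smooth) on ℂ² and its restriction f to Ω is holomorphic on Ω (this encodes f ∈ A^∞(Ω)). Then each coefficient function a_k : 𝔻 → ℂ extends to a continuous function on the closed unit disc, given for |z₁| ≤ 1 by a_k(z₁) = (1/2π) ∫_0^{2π} F(z₁, ρ(z₁)e^{iθ}) ρ(z₁)^{-k} e^{-ikθ} dθ where ρ(z₁) = exp(−ψ(z₁)). -/
open Metric intervalIntegral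

lemma hartogs_isOpen {ψ : ℂ → ℝ} (hψ : ContinuousOn ψ (closedBall (0 : ℂ) 1)) :
    IsOpen (HartogsDomain ψ) := by
  rw [isOpen_iff_mem_nhds]
  rintro ⟨z₁, z₂⟩ ⟨h1, h2⟩
  have hψc : ContinuousAt ψ z₁ :=
    hψ.continuousAt (mem_nhds_iff.2 ⟨ball (0:ℂ) 1, ball_subset_closedBall, isOpen_ball, h1⟩)
  have hc1 : ContinuousAt (fun z : ℂ × ℂ => ‖z.2‖) (z₁, z₂) :=
    (continuous_norm.comp continuous_snd).continuousAt
  have hc2 : ContinuousAt (fun z : ℂ × ℂ => Real.exp (-ψ z.1)) (z₁, z₂) :=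
    (Real.continuous_exp.continuousAt).comp ((hψc.comp continuousAt_fst).neg)
  have h3 : ∀ᶠ z : ℂ × ℂ in nhds (z₁, z₂), ‖z.2‖ < Real.exp (-ψ z.1) :=
    hc1.eventually_lt hc2 h2
  have h4 : ∀ᶠ z : ℂ × ℂ in nhds (z₁, z₂), z.1 ∈ ball (0:ℂ) 1 :=
    continuousAt_fst.preimage_mem_nhds (isOpen_ball.mem_nhds h1)
  filter_upwards [h3, h4] with z hz hz'
  exact ⟨hz', hz⟩

/-- If `ψ` is continuous on the closed unit disc and `F` is smooth on `ℂ²` with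
restriction to `Ω` holomorphic (`f ∈ A^∞(Ω)`), then each coefficient function `a_k`
extends continuously to the closed unit disc, and the extension is given by
`a_k(z₁) = (1/2π) ∫_0^{2π} F(z₁, ρ(z₁)e^{iθ}) ρ(z₁)^{-k} e^{-ikθ} dθ` with
`ρ(z₁) = e^{-ψ(z₁)}`. -/
theorem coeff_continuous_extension
    (ψ : ℂ → ℝ) (hψ : ContinuousOn ψ (closedBall (0 : ℂ) 1))
    (F : ℂ × ℂ → ℂ) (hF : ContDiff ℝ (⊤ : ℕ∞) F)
    (hf : DifferentiableOn ℂ F (HartogsDomain ψ)) :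
    ∀ k : ℕ, ∃ A : ℂ → ℂ,
      ContinuousOn A (closedBall (0 : ℂ) 1) ∧
      (∀ z₁ ∈ ball (0 : ℂ) 1, A z₁ = sliceCoeff F k z₁) ∧
      (∀ z₁ ∈ closedBall (0 : ℂ) 1,
        A z₁ = (1 / (2 * Real.pi) : ℝ) •
          ∫ θ in (0 : ℝ)..(2 * Real.pi),
            F (z₁, (Real.exp (-ψ z₁) : ℂ) * Complex.exp (θ * Complex.I)) *
              ((Real.exp (-ψ z₁) : ℂ)) ^ (-(k : ℤ)) *
              Complex.exp (-(k : ℂ) * θ * Complex.I)) := by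
  intro k
  -- Tietze extension of ψ
  obtain ⟨φ, hφ⟩ := ContinuousMap.exists_restrict_eq (X := ℂ) (Y := ℝ)
    (isClosed_closedBall) ⟨_, hψ.restrict⟩
  have hφψ : ∀ z ∈ closedBall (0:ℂ) 1, φ z = ψ z := fun z hz =>
    DFunLike.congr_fun hφ ⟨z, hz⟩
  set A : ℂ → ℂ := fun z₁ => (1 / (2 * Real.pi) : ℝ) •
      ∫ θ in (0 : ℝ)..(2 * Real.pi),
        F (z₁, (Real.exp (-φ z₁) : ℂ) * Complex.exp (θ * Complex.I)) *
          ((Real.exp (-φ z₁) : ℂ)) ^ (-(k : ℤ)) *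
          Complex.exp (-(k : ℂ) * θ * Complex.I) with hA
  have hAform : ∀ z₁ ∈ closedBall (0:ℂ) 1,
      A z₁ = (1 / (2 * Real.pi) : ℝ) •
        ∫ θ in (0 : ℝ)..(2 * Real.pi),
          F (z₁, (Real.exp (-ψ z₁) : ℂ) * Complex.exp (θ * Complex.I)) *
            ((Real.exp (-ψ z₁) : ℂ)) ^ (-(k : ℤ)) *
            Complex.exp (-(k : ℂ) * θ * Complex.I) := by
    intro z₁ hz₁
    simp only [hA, hφψ z₁ hz₁]
  refine ⟨A, ?_, ?_, hAform⟩
  · -- continuity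
    have hc : Continuous (Function.uncurry fun (z₁ : ℂ) (θ : ℝ) =>
        F (z₁, (Real.exp (-φ z₁) : ℂ) * Complex.exp (θ * Complex.I)) *
          ((Real.exp (-φ z₁) : ℂ)) ^ (-(k : ℤ)) *
          Complex.exp (-(k : ℂ) * θ * Complex.I)) := by
      have h1 : Continuous fun p : ℂ × ℝ => (Real.exp (-φ p.1) : ℂ) := by
        have := φ.continuous; fun_prop
      have h2 : Continuous fun p : ℂ × ℝ =>
          F (p.1, (Real.exp (-φ p.1) : ℂ) * Complex.exp (p.2 * Complex.I)) :=
        hF.continuous.comp (by fun_prop)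
      have h3 : Continuous fun p : ℂ × ℝ => ((Real.exp (-φ p.1) : ℂ)) ^ (-(k : ℤ)) :=
        h1.zpow₀ _ (fun p => Or.inl (by
          simp [Complex.ofReal_ne_zero, Real.exp_ne_zero]))
      have h4 : Continuous fun p : ℂ × ℝ => Complex.exp (-(k : ℂ) * p.2 * Complex.I) := by
        fun_prop
      exact ((h2.mul h3).mul h4)
    exact ((continuous_parametric_intervalIntegral_of_continuous' hc 0 (2*Real.pi)).const_smul
      (1 / (2 * Real.pi) : ℝ)).continuousOn
  · -- equality with sliceCoeff on the open ball
    intro z₁ hz₁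
    set r : ℝ := Real.exp (-ψ z₁) with hr
    have rpos : 0 < r := Real.exp_pos _
    set g : ℂ → ℂ := fun w => F (z₁, w) with hg
    have hΩ := hartogs_isOpen hψ
    have hgd : DifferentiableOn ℂ g (ball (0:ℂ) r) := by
      intro w hw
      have hmem : (z₁, w) ∈ HartogsDomain ψ := ⟨hz₁, by
        simpa [Complex.norm_def, hr] using mem_ball_zero_iff.1 hw⟩
      have hFd : DifferentiableAt ℂ F (z₁, w) := hf.differentiableAt (hΩ.mem_nhds hmem)
      exact (hFd.comp w ((differentiableAt_const z₁).prodMk differentiableAt_id)).differentiableWithinAt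
    have hgc : ContinuousOn g (closure (ball (0:ℂ) r)) :=
      (hF.continuous.comp (by fun_prop : Continuous fun w : ℂ => (z₁, w))).continuousOn
    set R : NNReal := ⟨r, rpos.le⟩ with hR
    have hps : HasFPowerSeriesOnBall g (cauchyPowerSeries g 0 r) 0 (R : ENNReal) :=
      DiffContOnCl.hasFPowerSeriesOnBall (R := R) ⟨hgd, hgc⟩ (by exact_mod_cast rpos)
    -- sliceCoeff equals coefficient of Cauchy power series
    have hcoeff : sliceCoeff F k z₁ = (cauchyPowerSeries g 0 r k) fun _ => (1:ℂ) := by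
      have h1 : iteratedDeriv k g 0 = iteratedFDeriv ℂ k g 0 fun _ => (1:ℂ) :=
        iteratedDeriv_eq_iteratedFDeriv
      have h2 := hps.factorial_smul (1:ℂ) k
      rw [sliceCoeff, ← hg, h1, ← h2, nsmul_eq_mul]
      field_simp [Nat.factorial_ne_zero]
    rw [hcoeff, cauchyPowerSeries_apply]
    -- expand the circle integral
    have hne : ∀ θ : ℝ, circleMap 0 r θ ≠ 0 := fun θ => circleMap_ne_center rpos.ne'
    have hkey : (∮ z in C(0, r), ((1:ℂ) / (z - 0)) ^ k • (z - 0)⁻¹ • g z)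
        = Complex.I * ∫ θ in (0:ℝ)..(2*Real.pi),
            F (z₁, (r : ℂ) * Complex.exp (θ * Complex.I)) *
              ((r : ℂ)) ^ (-(k : ℤ)) * Complex.exp (-(k : ℂ) * θ * Complex.I) := by
      rw [circleIntegral, ← intervalIntegral.integral_const_mul]
      apply intervalIntegral.integral_congr
      intro θ hθ
      have hz : circleMap 0 r θ = (r : ℂ) * Complex.exp (θ * Complex.I) := by
        simp [circleMap]
      have hzne : ((r:ℂ) * Complex.exp (θ * Complex.I)) ≠ 0 :=
        mul_ne_zero (by exact_mod_cast rpos.ne') (Complex.exp_ne_zero _)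
      have hexp : Complex.exp (θ * Complex.I) ≠ 0 := Complex.exp_ne_zero _
      have hrne : ((r:ℂ)) ≠ 0 := by exact_mod_cast rpos.ne'
      simp only [deriv_circleMap, hz]
      have hzpow : ((r:ℂ) * Complex.exp (θ * Complex.I)) ^ (-(k:ℤ))
          = (r:ℂ) ^ (-(k:ℤ)) * Complex.exp (-(k : ℂ) * θ * Complex.I) := by
        rw [mul_zpow]
        congr 1
        rw [← Complex.exp_int_mul]
        congr 1
        push_cast
        ring
      simp only [sub_zero, smul_eq_mul, hg]
      have hzpow' : (F (z₁, (r:ℂ) * Complex.exp (θ * Complex.I)) * (r:ℂ) ^ (-(k:ℤ)) *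
          Complex.exp (-(k:ℂ) * θ * Complex.I))
          = F (z₁, (r:ℂ) * Complex.exp (θ * Complex.I)) *
            ((r:ℂ) * Complex.exp (θ * Complex.I)) ^ (-(k:ℤ)) := by
        rw [hzpow]; ring
      rw [hzpow', zpow_neg, zpow_natCast]
      field_simp [hzne]
      have e1 : (r:ℂ) ^ k * ((r:ℂ)⁻¹) ^ k = 1 := by rw [← mul_pow, mul_inv_cancel₀ hrne, one_pow]
      have e2 : Complex.exp (θ * Complex.I) ^ k * (Complex.exp (θ * Complex.I))⁻¹ ^ k = 1 := by
        rw [← mul_pow, mul_inv_cancel₀ hexp, one_pow]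
      linear_combination (Complex.exp (θ * Complex.I) ^ k * (Complex.exp (θ * Complex.I))⁻¹ ^ k *
        F (z₁, (r:ℂ) * Complex.exp (θ * Complex.I))) * e1 +
        F (z₁, (r:ℂ) * Complex.exp (θ * Complex.I)) * e2
    rw [hkey]
    have hz₁' : z₁ ∈ closedBall (0:ℂ) 1 := ball_subset_closedBall hz₁
    rw [hAform z₁ hz₁', ← hr]
    have hπ : (Real.pi : ℂ) ≠ 0 := by exact_mod_cast Real.pi_ne_zero
    rw [Complex.real_smul, smul_eq_mul, ← mul_assoc]
    congr 1
    push_cast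
    field_simp [Complex.I_ne_zero]
end
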